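/- Let G be a maximally almost periodic locally compact Hausdorff group that respects compactness, let H be a locally compact Hausdorff group, and let t : H → G be a group homomorphism that is continuous as a map from H into G endowed with its Bohr topology. Then t is continuous as a map from H into G with its original locally compact topology. -/

import Mathlib

open scoped BoundedContinuousFunction

noncomputable section

/-- A complex-valued function on a group is *almost periodic* if for every `ε > 0` there is a
finite cover `G = G₁ ∪ … ∪ Gₙ` with `|f (z*x*w) - f (z*y*w)| < ε` whenever `x, y` lie in a
common member of the cover. -/
def IsAlmostPeriodic {G : Type*} [Group G] (f : G → ℂ) : Prop :=
  ∀ ε : ℝ, 0 < ε → ∃ (n : ℕ) (S : Fin n → Set G),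
    (⋃ i, S i) = (Set.univ : Set G) ∧
    ∀ (i : Fin n), ∀ z w x y : G, x ∈ S i → y ∈ S i →
      ‖f (z * x * w) - f (z * y * w)‖ < ε

/-- A continuous finite-dimensional unitary representation, in matrix form. -/
def IsUnitaryRep {G : Type*} [Group G] [TopologicalSpace G] (n : ℕ)
    (D : G → Matrix (Fin n) (Fin n) ℂ) : Prop :=
  Continuous D ∧ (∀ g, D g ∈ Matrix.unitaryGroup (Fin n) ℂ) ∧
    ∀ a b : G, D (a * b) = D a * D b

/-- Maximal almost periodicity: continuous finite-dimensional unitary representations separate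
points. -/
def MAPGroup (G : Type*) [Group G] [TopologicalSpace G] : Prop :=
  ∀ ⦃x y : G⦄, x ≠ y → ∃ (n : ℕ) (D : G → Matrix (Fin n) (Fin n) ℂ),
    IsUnitaryRep n D ∧ D x ≠ D y

/-- A continuous character: a continuous homomorphism into the circle group `𝕋 ⊆ ℂ`. -/
def IsCharacter {H : Type*} [Group H] [TopologicalSpace H] (γ : H → ℂ) : Prop :=
  Continuous γ ∧ (∀ h, ‖γ h‖ = 1) ∧ ∀ a b : H, γ (a * b) = γ a * γ b

/-- `T` respects (finite-dimensional) unitary representations: for every continuous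
homomorphism `D = (d_{jk})` of `G` into `U(n)`, the matrix `(T d_{jk})` defines a continuous
homomorphism of `H` into `U(n)`. -/
def RespectsUnitaryRepsB {G H : Type*} [Group G] [TopologicalSpace G]
    [Group H] [TopologicalSpace H] (T : (G →ᵇ ℂ) → (H →ᵇ ℂ)) : Prop :=
  ∀ (n : ℕ) (d : Matrix (Fin n) (Fin n) (G →ᵇ ℂ)),
    (∀ g : G, (Matrix.of fun j k => d j k g) ∈ Matrix.unitaryGroup (Fin n) ℂ) →
    (∀ a b : G, (Matrix.of fun j k => d j k (a * b)) =
      (Matrix.of fun j k => d j k a) * (Matrix.of fun j k => d j k b)) →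
    (∀ h : H, (Matrix.of fun j k => T (d j k) h) ∈ Matrix.unitaryGroup (Fin n) ℂ) ∧
    (∀ a b : H, (Matrix.of fun j k => T (d j k) (a * b)) =
      (Matrix.of fun j k => T (d j k) a) * (Matrix.of fun j k => T (d j k) b))

/-- The Bohr topology on a topological group: the initial topology induced by the family of all
continuous finite-dimensional unitary representations. -/
def bohrTopology (G : Type*) [Group G] [TopologicalSpace G] : TopologicalSpace G :=
  ⨅ (n : ℕ) (D : {D : G → Matrix (Fin n) (Fin n) ℂ // IsUnitaryRep n D}),
    TopologicalSpace.induced D.1 inferInstance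

/-- A topological group respects compactness if every subset compact in the Bohr topology is
compact in the original topology. -/
def RespectsCompactness (G : Type*) [Group G] [TopologicalSpace G] : Prop :=
  ∀ s : Set G, @IsCompact G (bohrTopology G) s → IsCompact s

universe u
/-- A space is realcompact if it admits a closed embedding into a product of copies of `ℝ`. -/
def IsRealcompact (X : Type u) (τ : TopologicalSpace X) : Prop :=
  ∃ (ι : Type u) (f : X → ι → ℝ), @Topology.IsClosedEmbedding X (ι → ℝ) τ inferInstance f

/-! The Bohr topology is coarser than the original one and, for a MAP group, Hausdorff. On a
compact set a Hausdorff coarser topology coincides with the original one. Given `x ∈ H`, take a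
compact neighbourhood `K`; then `t '' K` is Bohr compact, hence compact since `G` respects
compactness, so on `t '' K` the Bohr topology is the original one and Bohr continuity of `t`
at `x` is continuity at `x`. -/

open Filter Topology

theorem nhdsWithin_le_nhds_of_isCompact_of_le {X : Type*} {t₁ t₂ : TopologicalSpace X}
    (h₁₂ : t₁ ≤ t₂) (ht₂ : @T2Space X t₂) {C : Set X} (hC : @IsCompact X t₁ C) (x : X) :
    @nhdsWithin X t₂ x C ≤ @nhds X t₁ x := by
  intro U hU
  obtain ⟨V, hVU, hVo, hxV⟩ := (@mem_nhds_iff X t₁ x U).mp hU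
  have hCV : @IsCompact X t₂ (C \ V) := by
    simpa using @IsCompact.image X X t₁ t₂ _ id (@IsCompact.diff X t₁ C V hC hVo)
      (continuous_id_of_le h₁₂)
  refine (@mem_nhdsWithin X t₂ U x C).mpr
    ⟨(C \ V)ᶜ, (@IsCompact.isClosed X t₂ ht₂ _ hCV).isOpen_compl, fun hx => hx.2 hxV, ?_⟩
  rintro y ⟨hyCV, hyC⟩
  exact hVU (by_contra fun hyV => hyCV ⟨hyC, hyV⟩)

theorem continuous_of_continuous_coarser_of_isCompact {X Y : Type*} [TopologicalSpace X]
    [WeaklyLocallyCompactSpace X] {t₁ t₂ : TopologicalSpace Y} (h₁₂ : t₁ ≤ t₂)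
    (ht₂ : @T2Space Y t₂) (hcompact : ∀ s, @IsCompact Y t₂ s → @IsCompact Y t₁ s) {f : X → Y}
    (hf : @Continuous X Y _ t₂ f) : @Continuous X Y _ t₁ f := by
  refine @continuous_iff_continuousAt X Y _ t₁ f |>.mpr fun x => ?_
  obtain ⟨K, hK, hKx⟩ := exists_compact_mem_nhds x
  have hfK : @IsCompact Y t₁ (f '' K) := hcompact _ (@IsCompact.image X Y _ t₂ K f hK hf)
  have hf_within : Tendsto f (𝓝 x) (@nhdsWithin Y t₂ (f x) (f '' K)) :=
    tendsto_inf.mpr ⟨@Continuous.continuousAt X Y _ t₂ f x hf,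
      tendsto_principal.mpr (eventually_of_mem hKx fun y hy => ⟨y, hy, rfl⟩)⟩
  exact hf_within.mono_right (nhdsWithin_le_nhds_of_isCompact_of_le h₁₂ ht₂ hfK (f x))

theorem le_bohrTopology (G : Type*) [Group G] [tG : TopologicalSpace G] :
    tG ≤ bohrTopology G :=
  le_iInf fun _ => le_iInf fun D => continuous_iff_le_induced.mp D.2.1

theorem continuous_bohrTopology_of_isUnitaryRep {G : Type*} [Group G] [TopologicalSpace G]
    {n : ℕ} {D : G → Matrix (Fin n) (Fin n) ℂ} (hD : IsUnitaryRep n D) :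
    @Continuous G _ (bohrTopology G) _ D :=
  continuous_iff_le_induced.mpr <|
    iInf_le_of_le n <| iInf_le _ (⟨D, hD⟩ : {D // IsUnitaryRep n D})

theorem MAPGroup.t2Space_bohrTopology {G : Type*} [Group G] [TopologicalSpace G]
    (hG : MAPGroup G) : @T2Space G (bohrTopology G) := by
  refine @T2Space.mk G (bohrTopology G) fun x y hxy => ?_
  obtain ⟨n, D, hD, hDxy⟩ := hG hxy
  exact @separated_by_continuous G _ (bohrTopology G) _ _ _
    (continuous_bohrTopology_of_isUnitaryRep hD) x y hDxy

theorem bohr_continuous_hom_is_continuous_respectsCompactness_general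
    {G H : Type u} [Group G] [tG : TopologicalSpace G]
    [tH : TopologicalSpace H]
    [LocallyCompactSpace H]
    (hGmap : MAPGroup G) (hGrc : RespectsCompactness G)
    (t : H → G)
    (hbohr : @Continuous H G tH (bohrTopology G) t) :
    Continuous t :=
  continuous_of_continuous_coarser_of_isCompact (le_bohrTopology G) hGmap.t2Space_bohrTopology
    hGrc hbohr

/-- Let `G` be a maximally almost periodic locally compact Hausdorff group that respects
compactness, `H` a locally compact Hausdorff group, and `t : H → G` a group homomorphism that is
continuous into `G` with its Bohr topology. Then `t` is continuous into `G` with its original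
topology. -/
theorem bohr_continuous_hom_is_continuous_respectsCompactness
    {G H : Type u} [Group G] [tG : TopologicalSpace G] [IsTopologicalGroup G]
    [LocallyCompactSpace G] [T2Space G]
    [Group H] [tH : TopologicalSpace H] [IsTopologicalGroup H]
    [LocallyCompactSpace H] [T2Space H]
    (hGmap : MAPGroup G) (hGrc : RespectsCompactness G)
    (t : H → G) (hhom : ∀ a b : H, t (a * b) = t a * t b)
    (hbohr : @Continuous H G tH (bohrTopology G) t) :
    Continuous t :=
  bohr_continuous_hom_is_continuous_respectsCompactness_general (tG := tG) (tH := tH) hGmap hGrc t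
    hbohr

end
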